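/- Let d' > r ≥ 1 be integers and a_1, ..., a_{d'-r} nonnegative integers. Any d' of the d'+2 Kleinschmidt ray vectors obtained by removing one vector x_i (1 ≤ i ≤ d'-r+1) and one vector y_j (1 ≤ j ≤ r+1) form a Z-basis of Z^{d'}, i.e. the matrix they form has determinant ±1. -/

import Mathlib

/-!
The `x`-rays sum to zero and the `y`-rays sum to `∑ aᵢ xᵢ`, so the one `x`-ray and the one
`y`-ray left out lie in the span of the remaining `d'` rays. All the rays together contain the
standard basis, hence the remaining rays span `ℤ^{d'}`; being `d'` of them, they are linearly
independent, since a surjective endomorphism of `ℤ^{d'}` is injective.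
-/

open Finset

theorem Fin.sum_ite_val_eq {M : Type*} [AddCommMonoid M] {n : ℕ} (f : Fin n → M) (m : ℕ) :
    (∑ i : Fin n, if m = i then f i else 0) = if h : m < n then f ⟨m, h⟩ else 0 := by
  split_ifs with h
  · simpa [Fin.ext_iff] using sum_ite_eq univ (⟨m, h⟩ : Fin n) f
  · exact sum_eq_zero fun i _ => if_neg (by omega)

theorem Fin.sum_ite_eq_add {M : Type*} [AddCommMonoid M] (n c m : ℕ) (x : M) :
    (∑ i : Fin n, if m = c + i then x else 0) = if c ≤ m ∧ m < c + n then x else 0 := by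
  rw [Fin.sum_univ_eq_sum_range (fun i => if m = c + i then x else 0)]
  by_cases h : c ≤ m
  · obtain ⟨t, rfl⟩ := Nat.exists_eq_add_of_le h
    simp [sum_ite_eq]
  · rw [sum_eq_zero fun i _ => if_neg (by omega), if_neg (by omega)]

theorem Fintype.card_subtype_ne_inl_and_ne_inr {α β : Type*} [Fintype α] [Fintype β]
    [DecidableEq α] [DecidableEq β] (a : α) (b : β) :
    Fintype.card {p : α ⊕ β // p ≠ .inl a ∧ p ≠ .inr b} = card α + card β - 2 := by
  have hfilter : ({p | p ≠ .inl a ∧ p ≠ .inr b} : Finset (α ⊕ β)) = univ \ {.inl a, .inr b} := by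
    ext; simp [not_or]
  rw [card_subtype, hfilter, card_sdiff_of_subset (subset_univ _), card_pair (by simp)]
  simp

theorem forall_mem_of_sum_mem_of_forall_ne_mem {ι M S : Type*} [Fintype ι] [DecidableEq ι]
    [AddCommGroup M] [SetLike S M] [AddSubgroupClass S M] {p : S} {v : ι → M} (i₀ : ι)
    (hsum : ∑ i, v i ∈ p) (hne : ∀ i ≠ i₀, v i ∈ p) (i : ι) : v i ∈ p := by
  obtain rfl | hi := eq_or_ne i i₀
  · rw [← add_sum_erase _ _ (mem_univ i)] at hsum
    exact (add_mem_cancel_right (sum_mem fun j hj => hne j (ne_of_mem_erase hj))).1 hsum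
  · exact hne i hi

section Kleinschmidt

variable (d' r : ℕ) (a : Fin (d' - r) → ℤ)

def kleinschmidtX : Fin (d' - r + 1) → Fin d' → ℤ := fun i k =>
  if (i : ℕ) < d' - r then (if (k : ℕ) = (i : ℕ) then 1 else 0)
  else (if (k : ℕ) < d' - r then -1 else 0)

def kleinschmidtY : Fin (r + 1) → Fin d' → ℤ := fun j k =>
  if (j : ℕ) < r then (if (k : ℕ) = (d' - r) + (j : ℕ) then 1 else 0)
  else (if h : (k : ℕ) < d' - r then a ⟨(k : ℕ), h⟩ else -1)

theorem sum_kleinschmidtX : ∑ i, kleinschmidtX d' r i = 0 := by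
  ext k
  have h := Fin.sum_ite_val_eq (fun _ : Fin (d' - r) => (1 : ℤ)) k
  rw [Fin.sum_univ_castSucc]
  simp only [Pi.add_apply, Finset.sum_apply, kleinschmidtX, Fin.val_castSucc, Fin.is_lt,
    if_true, Fin.val_last, lt_irrefl, if_false, h]
  split_ifs <;> simp

theorem sum_kleinschmidtY :
    ∑ j, kleinschmidtY d' r a j = ∑ i, a i • kleinschmidtX d' r i.castSucc := by
  ext k
  have hY := Fin.sum_ite_eq_add r (d' - r) k (1 : ℤ)
  have hX := Fin.sum_ite_val_eq a k
  rw [Fin.sum_univ_castSucc]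
  simp only [Pi.add_apply, Finset.sum_apply, kleinschmidtY, kleinschmidtX, Fin.val_castSucc,
    Fin.is_lt, if_true, Fin.val_last, lt_irrefl, if_false, hY, Pi.smul_apply, smul_eq_mul,
    mul_ite, mul_one, mul_zero, hX]
  split_ifs <;> omega

theorem kleinschmidtX_eq_single (k : Fin d') (hk : (k : ℕ) < d' - r) :
    kleinschmidtX d' r ⟨k, by omega⟩ = Pi.single k 1 := by
  ext t
  simp [kleinschmidtX, hk, Pi.single_apply, Fin.ext_iff]

theorem kleinschmidtY_eq_single (k : Fin d') (hk : d' - r ≤ (k : ℕ)) :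
    kleinschmidtY d' r a ⟨k - (d' - r), by omega⟩ = Pi.single k 1 := by
  have hkr : (k : ℕ) - (d' - r) < r := by omega
  ext t
  simp [kleinschmidtY, hkr, Pi.single_apply, Fin.ext_iff, Nat.add_sub_cancel' hk]

theorem eq_top_of_kleinschmidt_rays_mem {S : Submodule ℤ (Fin d' → ℤ)}
    (hX : ∀ i, kleinschmidtX d' r i ∈ S) (hY : ∀ j, kleinschmidtY d' r a j ∈ S) : S = ⊤ := by
  rw [eq_top_iff, ← (Pi.basisFun ℤ (Fin d')).span_eq, Submodule.span_le]
  rintro _ ⟨k, rfl⟩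
  rw [SetLike.mem_coe, Pi.basisFun_apply]
  by_cases hk : (k : ℕ) < d' - r
  · exact kleinschmidtX_eq_single d' r k hk ▸ hX _
  · exact kleinschmidtY_eq_single d' r a k (by omega) ▸ hY _

end Kleinschmidt

theorem kleinschmidt_maximal_cones_smooth_general (d' r : ℕ) (hrd : r < d')
    (a : Fin (d' - r) → ℤ)
    (i0 : Fin (d' - r + 1)) (j0 : Fin (r + 1)) :
    let X : Fin (d' - r + 1) → Fin d' → ℤ := fun i k =>
      if (i : ℕ) < d' - r then (if (k : ℕ) = (i : ℕ) then 1 else 0)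
      else (if (k : ℕ) < d' - r then -1 else 0)
    let Y : Fin (r + 1) → Fin d' → ℤ := fun j k =>
      if (j : ℕ) < r then (if (k : ℕ) = (d' - r) + (j : ℕ) then 1 else 0)
      else (if h : (k : ℕ) < d' - r then a ⟨(k : ℕ), h⟩ else -1)
    let V : {p : Fin (d' - r + 1) ⊕ Fin (r + 1) // p ≠ Sum.inl i0 ∧ p ≠ Sum.inr j0} →
        Fin d' → ℤ := fun p => Sum.elim X Y p.1
    LinearIndependent ℤ V ∧ Submodule.span ℤ (Set.range V) = ⊤ := by
  intro X Y V
  set S := Submodule.span ℤ (Set.range V)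
  have hV (p) (hp) : Sum.elim X Y p ∈ S := Submodule.subset_span ⟨⟨p, hp⟩, rfl⟩
  have hX : ∀ i, kleinschmidtX d' r i ∈ S :=
    forall_mem_of_sum_mem_of_forall_ne_mem i0 (sum_kleinschmidtX d' r ▸ S.zero_mem)
      fun i hi => hV (.inl i) ⟨by simpa, by simp⟩
  have hY : ∀ j, kleinschmidtY d' r a j ∈ S :=
    forall_mem_of_sum_mem_of_forall_ne_mem j0
      (sum_kleinschmidtY d' r a ▸ S.sum_mem fun i _ => S.smul_mem _ (hX _))
      fun j hj => hV (.inr j) ⟨by simp, by simpa⟩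
  have hspan : S = ⊤ := eq_top_of_kleinschmidt_rays_mem d' r a hX hY
  refine ⟨linearIndependent_of_top_le_span_of_card_eq_finrank hspan.ge ?_, hspan⟩
  rw [Module.finrank_fin_fun, Fintype.card_subtype_ne_inl_and_ne_inr]
  simp only [Fintype.card_fin]
  omega

/-- Removing one `x`-ray and one `y`-ray from the Kleinschmidt rays leaves a
`ℤ`-basis of `ℤ^{d'}` (determinant `±1`, i.e. linearly independent and spanning). -/
theorem kleinschmidt_maximal_cones_smooth (d' r : ℕ) (hr : 1 ≤ r) (hrd : r < d')
    (a : Fin (d' - r) → ℤ) (ha : ∀ i, 0 ≤ a i)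
    (i0 : Fin (d' - r + 1)) (j0 : Fin (r + 1)) :
    let X : Fin (d' - r + 1) → Fin d' → ℤ := fun i k =>
      if (i : ℕ) < d' - r then (if (k : ℕ) = (i : ℕ) then 1 else 0)
      else (if (k : ℕ) < d' - r then -1 else 0)
    let Y : Fin (r + 1) → Fin d' → ℤ := fun j k =>
      if (j : ℕ) < r then (if (k : ℕ) = (d' - r) + (j : ℕ) then 1 else 0)
      else (if h : (k : ℕ) < d' - r then a ⟨(k : ℕ), h⟩ else -1)
    let V : {p : Fin (d' - r + 1) ⊕ Fin (r + 1) // p ≠ Sum.inl i0 ∧ p ≠ Sum.inr j0} →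
        Fin d' → ℤ := fun p => Sum.elim X Y p.1
    LinearIndependent ℤ V ∧ Submodule.span ℤ (Set.range V) = ⊤ :=
  kleinschmidt_maximal_cones_smooth_general d' r hrd a i0 j0
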